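/- Let α > β + 1/2 > 0 and set λ = min(α - β - 1/2, 1). Then the operator u defined by (uf)(t) = t^α ∫₀^∞ x^β e^{-xt} f(x) dx maps L₂[0,∞) boundedly into the Hölder space C_λ[0,1]: there is a constant C = C(α,β) such that for every f ∈ L₂[0,∞) and all 0 ≤ s < t ≤ 1, |(uf)(t) - (uf)(s)| ≤ C (t-s)^λ ‖f‖_{L₂[0,∞)}, and sup_{t∈[0,1]} |(uf)(t)| ≤ C ‖f‖_{L₂[0,∞)}. -/

import Mathlib

open MeasureTheory Filter Set

/-- The integral operator `(uf)(t) = t^α ∫₀^∞ x^β e^{-xt} f(x) dx` (note `(uf)(0) = 0`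
automatically, since `0^α = 0` for `α > 0`). -/
noncomputable def uFun (α β : ℝ) (f : Lp ℝ 2 (volume.restrict (Set.Ioi (0 : ℝ)))) (t : ℝ) : ℝ :=
  t ^ α * ∫ x in Set.Ioi (0 : ℝ), x ^ β * Real.exp (-(x * t)) * (f : ℝ → ℝ) x

/-! Write `(uf)(t) = t^α I(t)` with `I(t) = ∫₀^∞ x^β e^{-xt} f(x) dx`. Since
`∫₀^∞ x^{2q} e^{-2bx} dx = Γ(2q+1) (2b)^{-(2q+1)}`, Cauchy–Schwarz bounds the pairing of `f` with
any kernel dominated by `c x^q e^{-bx}` by `c √Γ(2q+1) b^{-(q+1/2)} ‖f‖`. This gives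
`|I(t)| ≲ t^{-(β+1/2)} ‖f‖`, hence the sup bound, and, as
`|e^{-xt} - e^{-xs}| ≤ (x(t-s))^λ e^{-xs}`, also `|I(t) - I(s)| ≲ (t-s)^λ s^{-(β+λ+1/2)} ‖f‖`. The Hölder bound then follows from
`u(t) - u(s) = (t^α - s^α) I(t) + s^α (I(t) - I(s))` and `t^α - s^α ≤ max(α,1) (t-s)^λ t^{α-λ}`:
every leftover power of `s` or `t` has a nonnegative exponent, because `λ ≤ α - β - 1/2`. -/

open Real

lemma one_sub_exp_neg_le_rpow {y l : ℝ} (hy : 0 ≤ y) (hl0 : 0 ≤ l) (hl1 : l ≤ 1) :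
    1 - exp (-y) ≤ y ^ l := by
  rcases le_or_gt 1 y with h | h
  · linarith [exp_pos (-y), one_le_rpow h hl0]
  · calc 1 - exp (-y) ≤ y := by linarith [add_one_le_exp (-y)]
      _ = y ^ (1 : ℝ) := (rpow_one y).symm
      _ ≤ y ^ l := rpow_le_rpow_of_exponent_ge' hy h.le hl0 hl1

lemma rpow_le_rpow_mul_rpow_sub {x y l p : ℝ} (hy : 0 < y) (hyx : y ≤ x) (hlp : l ≤ p) :
    y ^ p ≤ y ^ l * x ^ (p - l) :=
  calc y ^ p = y ^ l * y ^ (p - l) := by rw [← rpow_add hy, add_sub_cancel]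
    _ ≤ y ^ l * x ^ (p - l) := by gcongr

lemma rpow_sub_rpow_le_of_le_one {s t a : ℝ} (hs : 0 ≤ s) (hst : s ≤ t) (ha0 : 0 ≤ a)
    (ha1 : a ≤ 1) : t ^ a - s ^ a ≤ (t - s) ^ a := by
  have := rpow_add_le_add_rpow (sub_nonneg.2 hst) hs ha0 ha1
  rw [sub_add_cancel] at this
  linarith

lemma rpow_sub_rpow_le_of_one_le {s t a : ℝ} (hs : 0 ≤ s) (hst : s < t) (ha : 1 ≤ a) :
    t ^ a - s ^ a ≤ a * t ^ (a - 1) * (t - s) := by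
  have ht : 0 < t := hs.trans_lt hst
  have hbern := one_add_mul_self_le_rpow_one_add
    (by linarith [div_nonneg hs ht.le] : -1 ≤ s / t - 1) ha
  rw [add_sub_cancel] at hbern
  have hs_eq : s ^ a = t ^ a * (s / t) ^ a := by
    rw [← mul_rpow ht.le (div_nonneg hs ht.le), mul_div_cancel₀ _ ht.ne']
  have ht_eq : t ^ a = t ^ (a - 1) * t := by rw [← rpow_add_one ht.ne', sub_add_cancel]
  calc t ^ a - s ^ a ≤ t ^ a - t ^ a * (1 + a * (s / t - 1)) := by
        rw [hs_eq]; gcongr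
    _ = a * t ^ (a - 1) * (t - s) := by
        rw [ht_eq]; field_simp; ring

lemma rpow_sub_rpow_le {s t a l : ℝ} (hs : 0 ≤ s) (hst : s < t) (hl0 : 0 ≤ l) (hl1 : l ≤ 1)
    (hla : l ≤ a) : t ^ a - s ^ a ≤ max a 1 * (t - s) ^ l * t ^ (a - l) := by
  have hts : 0 < t - s := sub_pos.2 hst
  rcases le_total a 1 with ha1 | ha1
  · calc t ^ a - s ^ a ≤ (t - s) ^ a := rpow_sub_rpow_le_of_le_one hs hst.le (hl0.trans hla) ha1
      _ ≤ (t - s) ^ l * t ^ (a - l) := rpow_le_rpow_mul_rpow_sub hts (by linarith) hla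
      _ ≤ max a 1 * (t - s) ^ l * t ^ (a - l) := by
        rw [mul_assoc]
        exact le_mul_of_one_le_left
          (mul_nonneg (rpow_nonneg hts.le l) (rpow_nonneg (by linarith) _)) (le_max_right a 1)
  · have ht : 0 < t := hs.trans_lt hst
    calc t ^ a - s ^ a ≤ a * t ^ (a - 1) * (t - s) := rpow_sub_rpow_le_of_one_le hs hst ha1
      _ ≤ a * t ^ (a - 1) * ((t - s) ^ l * t ^ (1 - l)) := by
        gcongr
        simpa using rpow_le_rpow_mul_rpow_sub hts (by linarith : t - s ≤ t) hl1
      _ = a * (t - s) ^ l * t ^ (a - l) := by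
        rw [show a - l = (a - 1) + (1 - l) by ring, rpow_add ht]
        ring
      _ ≤ max a 1 * (t - s) ^ l * t ^ (a - l) := by gcongr; exact le_max_left a 1

section CauchySchwarz

variable {X : Type*} [MeasurableSpace X] {μ : Measure X}

lemma integral_mul_eq_inner_toLp {g : X → ℝ} (hg : MemLp g 2 μ) (f : Lp ℝ 2 μ) :
    ∫ x, g x * f x ∂μ = inner ℝ (hg.toLp g) f := by
  rw [L2.inner_def]
  refine integral_congr_ae ?_
  filter_upwards [hg.coeFn_toLp] with x hx
  rw [hx, RCLike.inner_apply, conj_trivial, mul_comm]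

lemma norm_toLp_eq_sqrt_integral_sq {m : X → ℝ} (hm : MemLp m 2 μ) :
    ‖hm.toLp m‖ = √(∫ x, m x ^ 2 ∂μ) := by
  rw [← Real.sqrt_sq (norm_nonneg _), ← real_inner_self_eq_norm_sq, ← integral_mul_eq_inner_toLp]
  congr 1
  refine integral_congr_ae ?_
  filter_upwards [hm.coeFn_toLp] with x hx
  rw [hx, sq]

lemma abs_integral_mul_le_of_abs_le_mul {g m : X → ℝ} {c : ℝ} (hg : AEStronglyMeasurable g μ)
    (hm : MemLp m 2 μ) (hc : 0 ≤ c) (hgm : ∀ᵐ x ∂μ, |g x| ≤ c * m x) (f : Lp ℝ 2 μ) :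
    |∫ x, g x * f x ∂μ| ≤ c * ‖hm.toLp m‖ * ‖f‖ := by
  have hg2 : MemLp g 2 μ := (hm.const_mul c).of_le hg <| by
    filter_upwards [hgm] with x hx
    exact hx.trans (le_abs_self _)
  have hgc : ∀ᵐ x ∂μ, ‖hg2.toLp g x‖ ≤ ‖(c • hm.toLp m) x‖ := by
    filter_upwards [hg2.coeFn_toLp, Lp.coeFn_smul c (hm.toLp m), hm.coeFn_toLp, hgm]
      with x hgx hcx hmx hx
    rw [hgx, hcx, Pi.smul_apply, hmx, smul_eq_mul, Real.norm_eq_abs, Real.norm_eq_abs]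
    exact hx.trans (le_abs_self _)
  rw [integral_mul_eq_inner_toLp hg2]
  calc _ ≤ ‖hg2.toLp g‖ * ‖f‖ := abs_real_inner_le_norm _ _
    _ ≤ ‖c • hm.toLp m‖ * ‖f‖ := by gcongr; exact Lp.norm_le_norm_of_ae_le hgc
    _ = c * ‖hm.toLp m‖ * ‖f‖ := by rw [norm_smul, Real.norm_of_nonneg hc]

end CauchySchwarz

noncomputable def powExpKernel (q b x : ℝ) : ℝ := x ^ q * exp (-(x * b))

section PowExpKernel

variable {q b : ℝ}

lemma powExpKernel_sq (q b : ℝ) {x : ℝ} (hx : 0 < x) :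
    powExpKernel q b x ^ 2 = x ^ (2 * q + 1 - 1) * exp (-(2 * b * x)) := by
  rw [powExpKernel, mul_pow, ← rpow_natCast, ← rpow_mul hx.le, ← exp_nat_mul]
  ring_nf

lemma measurable_powExpKernel (q b : ℝ) : Measurable (powExpKernel q b) := by
  unfold powExpKernel
  fun_prop

lemma memLp_powExpKernel (hq : -1 < 2 * q) (hb : 0 < b) :
    MemLp (powExpKernel q b) 2 (volume.restrict (Ioi 0)) := by
  refine (memLp_two_iff_integrable_sq (measurable_powExpKernel q b).aestronglyMeasurable).2 ?_
  refine (integrableOn_rpow_mul_exp_neg_mul_rpow hq one_pos (by positivity : 0 < 2 * b)).congr_fun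
    (fun x hx => ?_) measurableSet_Ioi
  dsimp only
  rw [powExpKernel_sq q b hx, rpow_one]
  ring_nf

lemma integral_powExpKernel_sq (hq : -1 < 2 * q) (hb : 0 < b) :
    ∫ x in Ioi 0, powExpKernel q b x ^ 2 = (1 / (2 * b)) ^ (2 * q + 1) * Gamma (2 * q + 1) := by
  rw [← integral_rpow_mul_exp_neg_mul_Ioi (by linarith) (by positivity)]
  exact setIntegral_congr_fun measurableSet_Ioi fun x hx => powExpKernel_sq q b hx

lemma norm_toLp_powExpKernel_le (hq : -1 < 2 * q) (hb : 0 < b) :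
    ‖(memLp_powExpKernel hq hb).toLp _‖ ≤ √(Gamma (2 * q + 1)) * b ^ (-(q + 1 / 2)) := by
  rw [norm_toLp_eq_sqrt_integral_sq, integral_powExpKernel_sq hq hb,
    Real.sqrt_mul (by positivity), mul_comm]
  gcongr
  rw [Real.sqrt_eq_rpow, ← rpow_mul (by positivity), one_div, Real.inv_rpow (by positivity),
    ← rpow_neg (by positivity), show -((2 * q + 1) * (1 / 2)) = -(q + 1 / 2) by ring]
  exact rpow_le_rpow_of_nonpos hb (by linarith) (by linarith)

lemma abs_powExpKernel_sub_le (q : ℝ) {x s t l : ℝ} (hx : 0 < x) (hst : s ≤ t) (hl0 : 0 ≤ l)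
    (hl1 : l ≤ 1) :
    |powExpKernel q t x - powExpKernel q s x| ≤ (t - s) ^ l * powExpKernel (q + l) s x := by
  have hxts : 0 ≤ x * (t - s) := mul_nonneg hx.le (sub_nonneg.2 hst)
  have hsplit : powExpKernel q t x - powExpKernel q s x
      = -(x ^ q * exp (-(x * s)) * (1 - exp (-(x * (t - s))))) := by
    simp only [powExpKernel]
    rw [show -(x * t) = -(x * s) + -(x * (t - s)) by ring, exp_add]
    ring
  rw [hsplit, abs_neg, abs_of_nonneg (mul_nonneg (by positivity)
    (sub_nonneg.2 (exp_le_one_iff.2 (neg_nonpos.2 hxts))))]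
  calc x ^ q * exp (-(x * s)) * (1 - exp (-(x * (t - s))))
      ≤ x ^ q * exp (-(x * s)) * (x * (t - s)) ^ l := by
        gcongr
        exact one_sub_exp_neg_le_rpow hxts hl0 hl1
    _ = (t - s) ^ l * powExpKernel (q + l) s x := by
        rw [powExpKernel, mul_rpow hx.le (sub_nonneg.2 hst), rpow_add hx]
        ring

end PowExpKernel

section KernelIntegral

variable {q b : ℝ} (f : Lp ℝ 2 (volume.restrict (Ioi (0 : ℝ))))

lemma abs_integral_mul_le_of_abs_le_powExpKernel {g : ℝ → ℝ} {c : ℝ} (hq : -1 < 2 * q)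
    (hb : 0 < b) (hc : 0 ≤ c) (hg : AEStronglyMeasurable g (volume.restrict (Ioi 0)))
    (hgk : ∀ x, 0 < x → |g x| ≤ c * powExpKernel q b x) :
    |∫ x in Ioi 0, g x * f x| ≤ c * (√(Gamma (2 * q + 1)) * b ^ (-(q + 1 / 2))) * ‖f‖ := by
  refine (abs_integral_mul_le_of_abs_le_mul hg (memLp_powExpKernel hq hb) hc ?_ f).trans ?_
  · exact (ae_restrict_iff' measurableSet_Ioi).2 (ae_of_all _ hgk)
  · gcongr
    exact norm_toLp_powExpKernel_le hq hb

lemma abs_integral_powExpKernel_mul_le (hq : -1 < 2 * q) (hb : 0 < b) :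
    |∫ x in Ioi 0, powExpKernel q b x * f x| ≤ √(Gamma (2 * q + 1)) * b ^ (-(q + 1 / 2)) * ‖f‖ := by
  simpa using abs_integral_mul_le_of_abs_le_powExpKernel f hq hb zero_le_one
    (measurable_powExpKernel q b).aestronglyMeasurable
    fun x hx => by rw [one_mul, abs_of_nonneg (by unfold powExpKernel; positivity)]

lemma abs_integral_powExpKernel_sub_mul_le {s t l : ℝ} (hq : -1 < 2 * q) (hs : 0 < s)
    (hst : s ≤ t) (hl0 : 0 ≤ l) (hl1 : l ≤ 1) :
    |(∫ x in Ioi 0, powExpKernel q t x * f x) - ∫ x in Ioi 0, powExpKernel q s x * f x|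
      ≤ (t - s) ^ l * (√(Gamma (2 * (q + l) + 1)) * s ^ (-(q + l + 1 / 2))) * ‖f‖ := by
  have hint : ∀ {b : ℝ}, 0 < b →
      Integrable (fun x => powExpKernel q b x * f x) (volume.restrict (Ioi 0)) :=
    fun hb => (memLp_powExpKernel hq hb).integrable_mul (Lp.memLp f)
  rw [← integral_sub (hint (hs.trans_le hst)) (hint hs)]
  simp_rw [← sub_mul]
  exact abs_integral_mul_le_of_abs_le_powExpKernel f (by linarith) hs (by positivity)
    ((measurable_powExpKernel q t).sub (measurable_powExpKernel q s)).aestronglyMeasurable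
    fun x hx => abs_powExpKernel_sub_le q hx hst hl0 hl1

end KernelIntegral

section Operator

variable {α β : ℝ} (f : Lp ℝ 2 (volume.restrict (Ioi (0 : ℝ))))

lemma uFun_zero (hα : α ≠ 0) : uFun α β f 0 = 0 := by
  simp [uFun, zero_rpow hα]

lemma abs_uFun_le (hβ : -1 < 2 * β) (hα : α ≠ 0) {t : ℝ} (ht : 0 ≤ t) :
    |uFun α β f t| ≤ √(Gamma (2 * β + 1)) * t ^ (α - β - 1 / 2) * ‖f‖ := by
  rcases ht.eq_or_lt with rfl | ht
  · rw [uFun_zero f hα, abs_zero]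
    positivity
  calc |uFun α β f t| = t ^ α * |∫ x in Ioi 0, powExpKernel β t x * f x| := by
        rw [uFun, abs_mul, abs_of_nonneg (by positivity)]
        rfl
    _ ≤ t ^ α * (√(Gamma (2 * β + 1)) * t ^ (-(β + 1 / 2)) * ‖f‖) := by
        gcongr
        exact abs_integral_powExpKernel_mul_le f hβ ht
    _ = √(Gamma (2 * β + 1)) * t ^ (α - β - 1 / 2) * ‖f‖ := by
        rw [show α - β - 1 / 2 = α + -(β + 1 / 2) by ring, rpow_add ht]
        ring

lemma abs_uFun_sub_le {l s t : ℝ} (hβ : -1 < 2 * β) (hl0 : 0 ≤ l) (hl1 : l ≤ 1)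
    (hlαβ : l ≤ α - β - 1 / 2) (hs : 0 < s) (hst : s < t) (ht1 : t ≤ 1) :
    |uFun α β f t - uFun α β f s|
      ≤ (max α 1 * √(Gamma (2 * β + 1)) + √(Gamma (2 * (β + l) + 1))) * (t - s) ^ l * ‖f‖ := by
  have ht : 0 < t := hs.trans hst
  set It := ∫ x in Ioi 0, powExpKernel β t x * f x
  set Is := ∫ x in Ioi 0, powExpKernel β s x * f x
  have hsplit : uFun α β f t - uFun α β f s = (t ^ α - s ^ α) * It + s ^ α * (It - Is) := by
    change t ^ α * It - s ^ α * Is = _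
    ring
  have htα : 0 ≤ t ^ α - s ^ α := sub_nonneg.2 (rpow_le_rpow hs.le hst.le (by linarith))
  have hX : 0 ≤ (t - s) ^ l * ‖f‖ := by positivity
  have hIt : (t ^ α - s ^ α) * |It|
      ≤ max α 1 * √(Gamma (2 * β + 1)) * ((t - s) ^ l * ‖f‖) * t ^ (α - l + -(β + 1 / 2)) := by
    calc (t ^ α - s ^ α) * |It|
        ≤ max α 1 * (t - s) ^ l * t ^ (α - l)
          * (√(Gamma (2 * β + 1)) * t ^ (-(β + 1 / 2)) * ‖f‖) := by
          have hα := rpow_sub_rpow_le hs.le hst hl0 hl1 (by linarith : l ≤ α)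
          exact mul_le_mul hα (abs_integral_powExpKernel_mul_le f hβ ht) (abs_nonneg _)
            (htα.trans hα)
      _ = _ := by rw [rpow_add ht]; ring
  have hIts : s ^ α * |It - Is|
      ≤ √(Gamma (2 * (β + l) + 1)) * ((t - s) ^ l * ‖f‖) * s ^ (α + -(β + l + 1 / 2)) := by
    calc s ^ α * |It - Is|
        ≤ s ^ α * ((t - s) ^ l * (√(Gamma (2 * (β + l) + 1)) * s ^ (-(β + l + 1 / 2))) * ‖f‖) := by
          gcongr
          exact abs_integral_powExpKernel_sub_mul_le f hβ hs hst.le hl0 hl1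
      _ = _ := by rw [rpow_add hs]; ring
  have hpow_t : t ^ (α - l + -(β + 1 / 2)) ≤ 1 := rpow_le_one ht.le ht1 (by linarith)
  have hpow_s : s ^ (α + -(β + l + 1 / 2)) ≤ 1 := rpow_le_one hs.le (by linarith) (by linarith)
  rw [hsplit]
  calc |(t ^ α - s ^ α) * It + s ^ α * (It - Is)|
      ≤ |(t ^ α - s ^ α) * It| + |s ^ α * (It - Is)| := abs_add_le _ _
    _ ≤ max α 1 * √(Gamma (2 * β + 1)) * ((t - s) ^ l * ‖f‖)
        + √(Gamma (2 * (β + l) + 1)) * ((t - s) ^ l * ‖f‖) := by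
      rw [abs_mul, abs_mul, abs_of_nonneg htα, abs_of_nonneg (rpow_nonneg hs.le α)]
      exact add_le_add (hIt.trans (mul_le_of_le_one_right (mul_nonneg (by positivity) hX) hpow_t))
        (hIts.trans (mul_le_of_le_one_right (mul_nonneg (by positivity) hX) hpow_s))
    _ = _ := by ring

end Operator

/-- **The operator `u` maps `L₂[0,∞)` boundedly into the Hölder space `C_λ[0,1]`.**
Let `α > β + 1/2 > 0` and `λ = min(α - β - 1/2, 1)`. Then there is `C = C(α,β)` such that for
every `f ∈ L₂[0,∞)` and all `0 ≤ s < t ≤ 1`,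
`|(uf)(t) - (uf)(s)| ≤ C (t-s)^λ ‖f‖_{L₂}` and `sup_{[0,1]} |uf| ≤ C ‖f‖_{L₂}`. -/
theorem u_into_holder
    (α β : ℝ) (hβ : 0 < β + 1 / 2) (hαβ : β + 1 / 2 < α) :
    ∃ C : ℝ, 0 ≤ C ∧
      ∀ f : Lp ℝ 2 (volume.restrict (Set.Ioi (0 : ℝ))),
        (∀ s t : ℝ, 0 ≤ s → s < t → t ≤ 1 →
          |uFun α β f t - uFun α β f s| ≤
            C * (t - s) ^ min (α - β - 1 / 2) 1 * ‖f‖) ∧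
        (∀ t ∈ Set.Icc (0 : ℝ) 1, |uFun α β f t| ≤ C * ‖f‖) := by
  set l := min (α - β - 1 / 2) 1
  have hl0 : 0 ≤ l := le_min (by linarith) zero_le_one
  have hlαβ : l ≤ α - β - 1 / 2 := min_le_left _ _
  have hβ' : -1 < 2 * β := by linarith
  have hα : α ≠ 0 := by linarith
  set c₀ := √(Gamma (2 * β + 1))
  refine ⟨c₀ + (max α 1 * c₀ + √(Gamma (2 * (β + l) + 1))), by positivity, fun f => ⟨?_, ?_⟩⟩
  · intro s t hs hst ht1
    rcases hs.eq_or_lt with rfl | hs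
    · calc |uFun α β f t - uFun α β f 0| ≤ c₀ * t ^ (α - β - 1 / 2) * ‖f‖ := by
            rw [uFun_zero f hα, sub_zero]
            exact abs_uFun_le f hβ' hα hst.le
        _ ≤ c₀ * (t - 0) ^ l * ‖f‖ := by
            rw [sub_zero]
            gcongr c₀ * ?_ * _
            exact rpow_le_rpow_of_exponent_ge hst ht1 hlαβ
        _ ≤ _ := by gcongr; exact le_add_of_nonneg_right (by positivity)
    · refine (abs_uFun_sub_le f hβ' hl0 (min_le_right _ _) hlαβ hs hst ht1).trans ?_
      gcongr ?_ * _ * _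
      exact le_add_of_nonneg_left (by positivity)
  · rintro t ⟨ht0, ht1⟩
    calc |uFun α β f t| ≤ c₀ * t ^ (α - β - 1 / 2) * ‖f‖ := abs_uFun_le f hβ' hα ht0
      _ ≤ c₀ * 1 * ‖f‖ := by gcongr; exact rpow_le_one ht0 ht1 (by linarith)
      _ ≤ _ := by rw [mul_one]; gcongr; exact le_add_of_nonneg_right (by positivity)
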